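/- (Instantaneous lenient regret bound — deterministic core of Theorem 2.) Let M be a symmetric positive definite real n×n matrix, τ ∈ ℝ, w_t, w* ∈ Δ_n, β ≥ 0, and let X be a finite nonempty set with vectors f_x, u_x, σ_x ∈ ℝ^n for each x ∈ X satisfying componentwise f_x ≤ u_x ≤ f_x + 2βσ_x and σ_x ≥ 0. Assume there exists x̂ ∈ X with ⟨w_t, f_{x̂}⟩ ≥ τ. For x with ⟨w_t, u_x⟩ ≥ τ define κ̂(x) := sup_{w ∈ Δ_n, w ≠ w_t} (τ − ⟨w, u_x⟩)/‖w − w_t‖_M, and κ̂(x) := +∞ otherwise, and let x_t ∈ argmin_{x ∈ X} κ̂(x). Let B' := max_{x ∈ X} ‖f_x‖_{M⁻¹} and ε := ‖w* − w_t‖_M. Then τ − ⟨w*, f_{x_t}⟩ ≤ εB' + 2β⟨w*, σ_{x_t}⟩. -/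

import Mathlib

open Matrix

/-- The MMD (maximum mean discrepancy) "norm" `‖w‖_M = √(wᵀ M w)` associated with a
kernel matrix `M`. -/
noncomputable def mmd {n : ℕ} (M : Matrix (Fin n) (Fin n) ℝ) (w : Fin n → ℝ) : ℝ :=
  Real.sqrt (w ⬝ᵥ M.mulVec w)

/-- The supremum (in the extended reals) appearing in the definition of the estimated
fragility: `sup_{w ∈ Δ_n, w ≠ w_t} (τ - ⟨w, v⟩)/‖w - w_t‖_M`. -/
noncomputable def fragSup {n : ℕ} (M : Matrix (Fin n) (Fin n) ℝ) (τ : ℝ)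
    (wt v : Fin n → ℝ) : EReal :=
  ⨆ w : {w : Fin n → ℝ // w ∈ stdSimplex ℝ (Fin n) ∧ w ≠ wt},
    (((τ - (w : Fin n → ℝ) ⬝ᵥ v) / mmd M ((w : Fin n → ℝ) - wt) : ℝ) : EReal)

/-- The estimated fragility `κ̂_τ(x)` of an action whose upper-confidence-bound vector is
`u`: `sup_{w ∈ Δ_n, w ≠ w_t} (τ - ⟨w, u⟩)/‖w - w_t‖_M` if `⟨w_t, u⟩ ≥ τ`, and `+∞`
otherwise. -/
noncomputable def estFragility {n : ℕ} (M : Matrix (Fin n) (Fin n) ℝ) (τ : ℝ)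
    (wt u : Fin n → ℝ) : EReal :=
  if τ ≤ wt ⬝ᵥ u then fragSup M τ wt u else ⊤

/-!
Since the feasible action `x̂` satisfies `τ ≤ ⟨w, f_x̂⟩ + ⟨w_t - w, f_x̂⟩` for every `w ∈ Δ_n` and
`f ≤ u`, Cauchy–Schwarz between `‖·‖_M` and `‖·‖_{M⁻¹}` bounds its estimated fragility by
`‖f_x̂‖_{M⁻¹} ≤ B'`. The minimizer `x_t` inherits the bound, so it is optimistically feasible and,
taking `w = w*` in the supremum, `τ - ⟨w*, u_{x_t}⟩ ≤ εB'`. The confidence width `u ≤ f + 2βσ`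
then converts `u_{x_t}` into `f_{x_t}`.
-/

theorem Matrix.PosSemidef.dotProduct_mulVec_sq_le {ι : Type*} [Fintype ι]
    {M : Matrix ι ι ℝ} (hM : M.PosSemidef) (x y : ι → ℝ) :
    (x ⬝ᵥ M *ᵥ y) ^ 2 ≤ (x ⬝ᵥ M *ᵥ x) * (y ⬝ᵥ M *ᵥ y) := by
  let := M.toSeminormedAddCommGroup hM
  let := M.toInnerProductSpace hM
  have hinner (a b : ι → ℝ) : inner ℝ a b = a ⬝ᵥ M *ᵥ b := dotProduct_comm _ _
  have hsymm : y ⬝ᵥ M *ᵥ x = x ⬝ᵥ M *ᵥ y := by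
    rw [dotProduct_mulVec, ← mulVec_transpose, ← conjTranspose_eq_transpose_of_trivial,
      hM.isHermitian.eq, dotProduct_comm]
  simpa only [hinner, sq, hsymm] using real_inner_mul_inner_self_le x y

section Mmd

variable {n : ℕ} {M : Matrix (Fin n) (Fin n) ℝ}

lemma mmd_pos (hM : M.PosDef) {v : Fin n → ℝ} (hv : v ≠ 0) : 0 < mmd M v :=
  Real.sqrt_pos.mpr (by simpa using hM.dotProduct_mulVec_pos hv)

lemma mmd_sub_comm (v w : Fin n → ℝ) : mmd M (v - w) = mmd M (w - v) := by
  rw [← neg_sub w v, mmd, mmd, mulVec_neg, neg_dotProduct, dotProduct_neg, neg_neg]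

-- Cauchy–Schwarz in the `M`-inner product, applied to `a` and `M⁻¹ b`.
lemma dotProduct_le_mmd_mul_sqrt_inv (hM : M.PosDef) (a b : Fin n → ℝ) :
    a ⬝ᵥ b ≤ mmd M a * √(b ⬝ᵥ M⁻¹ *ᵥ b) := by
  have hMinv : M *ᵥ (M⁻¹ *ᵥ b) = b := by
    rw [mulVec_mulVec, mul_nonsing_inv _ hM.det_pos.ne'.isUnit, one_mulVec]
  have hcs := hM.posSemidef.dotProduct_mulVec_sq_le a (M⁻¹ *ᵥ b)
  rw [hMinv, dotProduct_comm (M⁻¹ *ᵥ b)] at hcs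
  have ha : 0 ≤ a ⬝ᵥ M *ᵥ a := by simpa using hM.posSemidef.dotProduct_mulVec_nonneg a
  calc a ⬝ᵥ b ≤ |a ⬝ᵥ b| := le_abs_self _
    _ ≤ √((a ⬝ᵥ M *ᵥ a) * (b ⬝ᵥ M⁻¹ *ᵥ b)) := Real.abs_le_sqrt hcs
    _ = mmd M a * √(b ⬝ᵥ M⁻¹ *ᵥ b) := Real.sqrt_mul ha _

end Mmd

section Fragility

variable {n : ℕ} {M : Matrix (Fin n) (Fin n) ℝ} {τ : ℝ} {wt : Fin n → ℝ}

lemma fragSup_le_sqrt_inv (hM : M.PosDef) {f u : Fin n → ℝ} (hfu : f ≤ u)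
    (hτ : τ ≤ wt ⬝ᵥ f) : fragSup M τ wt u ≤ (√(f ⬝ᵥ M⁻¹ *ᵥ f) : ℝ) := by
  refine iSup_le fun ⟨w, hw, hne⟩ => EReal.coe_le_coe_iff.mpr ?_
  rw [div_le_iff₀ (mmd_pos hM (sub_ne_zero.mpr hne))]
  calc τ - w ⬝ᵥ u ≤ (wt - w) ⬝ᵥ f := by
        have := dotProduct_le_dotProduct_of_nonneg_left hfu hw.1
        rw [sub_dotProduct]
        linarith
    _ ≤ mmd M (wt - w) * √(f ⬝ᵥ M⁻¹ *ᵥ f) := dotProduct_le_mmd_mul_sqrt_inv hM _ _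
    _ = √(f ⬝ᵥ M⁻¹ *ᵥ f) * mmd M (w - wt) := by rw [mmd_sub_comm, mul_comm]

lemma estFragility_le_sqrt_inv (hM : M.PosDef) (hwt : wt ∈ stdSimplex ℝ (Fin n))
    {f u : Fin n → ℝ} (hfu : f ≤ u) (hτ : τ ≤ wt ⬝ᵥ f) :
    estFragility M τ wt u ≤ (√(f ⬝ᵥ M⁻¹ *ᵥ f) : ℝ) := by
  rw [estFragility, if_pos (hτ.trans (dotProduct_le_dotProduct_of_nonneg_left hfu hwt.1))]
  exact fragSup_le_sqrt_inv hM hfu hτ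

lemma sub_dotProduct_le_of_estFragility_le (hM : M.PosDef) {u : Fin n → ℝ} {c : ℝ}
    (hκ : estFragility M τ wt u ≤ c) {w : Fin n → ℝ} (hw : w ∈ stdSimplex ℝ (Fin n)) :
    τ - w ⬝ᵥ u ≤ mmd M (w - wt) * c := by
  have hτ : τ ≤ wt ⬝ᵥ u := by
    by_contra hτ
    rw [estFragility, if_neg hτ, top_le_iff] at hκ
    exact EReal.coe_ne_top c hκ
  rw [estFragility, if_pos hτ] at hκ
  obtain rfl | hne := eq_or_ne w wt
  · simpa [mmd] using hτ
  have hw_le := iSup_le_iff.mp hκ ⟨w, hw, hne⟩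
  rw [EReal.coe_le_coe_iff, div_le_iff₀ (mmd_pos hM (sub_ne_zero.mpr hne))] at hw_le
  linarith

end Fragility

theorem instantaneous_lenient_regret_bound_general {n : ℕ} (M : Matrix (Fin n) (Fin n) ℝ)
    (hM : M.PosDef) (τ : ℝ) (wt wstar : Fin n → ℝ)
    (hwt : wt ∈ stdSimplex ℝ (Fin n)) (hwstar : wstar ∈ stdSimplex ℝ (Fin n))
    (β : ℝ)
    {X : Type*} [Fintype X]
    (f u σ : X → Fin n → ℝ)
    (hfu : ∀ x i, f x i ≤ u x i)
    (huf : ∀ x i, u x i ≤ f x i + 2 * β * σ x i)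
    (hfeas : ∃ xhat : X, τ ≤ wt ⬝ᵥ f xhat)
    (xt : X) (hxt : ∀ x : X, estFragility M τ wt (u xt) ≤ estFragility M τ wt (u x)) :
    τ - wstar ⬝ᵥ f xt
      ≤ mmd M (wstar - wt) * (⨆ x : X, Real.sqrt (f x ⬝ᵥ M⁻¹.mulVec (f x)))
        + 2 * β * (wstar ⬝ᵥ σ xt) := by
  obtain ⟨xhat, hxhat⟩ := hfeas
  have hB' : √(f xhat ⬝ᵥ M⁻¹ *ᵥ f xhat) ≤ ⨆ x : X, √(f x ⬝ᵥ M⁻¹ *ᵥ f x) :=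
    le_ciSup (Finite.bddAbove_range fun x => √(f x ⬝ᵥ M⁻¹ *ᵥ f x)) xhat
  have hκ : estFragility M τ wt (u xt) ≤ ((⨆ x : X, √(f x ⬝ᵥ M⁻¹ *ᵥ f x) : ℝ) : EReal) :=
    (hxt xhat).trans <|
      (estFragility_le_sqrt_inv hM hwt (hfu xhat) hxhat).trans (EReal.coe_le_coe_iff.mpr hB')
  have hregret := sub_dotProduct_le_of_estFragility_le hM hκ hwstar
  have hwidth : wstar ⬝ᵥ u xt ≤ wstar ⬝ᵥ (f xt + (2 * β) • σ xt) :=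
    dotProduct_le_dotProduct_of_nonneg_left (huf xt) hwstar.1
  rw [dotProduct_add, dotProduct_smul, smul_eq_mul] at hwidth
  linarith

/-- **instantaneous lenient regret bound — deterministic core of Theorem 2.**
With `f_x ≤ u_x ≤ f_x + 2βσ_x` componentwise, `σ_x ≥ 0`, some action feasible under the
reference distribution `w_t`, `x_t` a minimizer of the estimated fragility,
`B' = max_x ‖f_x‖_{M⁻¹}` and `ε = ‖w* - w_t‖_M`, we have
`τ - ⟨w*, f_{x_t}⟩ ≤ εB' + 2β⟨w*, σ_{x_t}⟩`. -/
theorem instantaneous_lenient_regret_bound {n : ℕ} (M : Matrix (Fin n) (Fin n) ℝ)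
    (hM : M.PosDef) (τ : ℝ) (wt wstar : Fin n → ℝ)
    (hwt : wt ∈ stdSimplex ℝ (Fin n)) (hwstar : wstar ∈ stdSimplex ℝ (Fin n))
    (β : ℝ) (hβ : 0 ≤ β)
    {X : Type*} [Fintype X] [Nonempty X]
    (f u σ : X → Fin n → ℝ)
    (hfu : ∀ x i, f x i ≤ u x i)
    (huf : ∀ x i, u x i ≤ f x i + 2 * β * σ x i)
    (hσ : ∀ x i, 0 ≤ σ x i)
    (hfeas : ∃ xhat : X, τ ≤ wt ⬝ᵥ f xhat)
    (xt : X) (hxt : ∀ x : X, estFragility M τ wt (u xt) ≤ estFragility M τ wt (u x)) :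
    τ - wstar ⬝ᵥ f xt
      ≤ mmd M (wstar - wt) * (⨆ x : X, Real.sqrt (f x ⬝ᵥ M⁻¹.mulVec (f x)))
        + 2 * β * (wstar ⬝ᵥ σ xt) :=
  instantaneous_lenient_regret_bound_general M hM τ wt wstar hwt hwstar β f u σ hfu huf hfeas xt hxt
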